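/- In the semidirect product 𝔞 ⋊ μ, where μ = ⟨ζ⟩ is a cyclic group of roots of unity acting on an ideal 𝔞 by multiplication, two elements (r, ζ^i) and (s, ζ^j) are conjugate if and only if i = j and there exist ξ ∈ μ and t ∈ 𝔞 such that s = ξ(r + (1 − ζ^i)t). -/

import Mathlib

open SemidirectProduct Subgroup

/-- The monoid homomorphism `AddAut A →* MulAut (Multiplicative A)`. -/
def addAutToMulAut (A : Type*) [AddGroup A] : Multiplicative (AddAut A) →* MulAut (Multiplicative A) where
  toFun e := AddEquiv.toMultiplicative e
  map_one' := rfl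
  map_mul' _ _ := rfl

variable {R : Type*} [CommRing R]

/-- The action of a subgroup `μ ≤ Rˣ` on (the multiplicative version of) the additive group
of an ideal `𝔞` of `R`, by multiplication. -/
noncomputable def idealAction (μ : Subgroup Rˣ) (𝔞 : Ideal R) :
    ↥μ →* MulAut (Multiplicative ↥𝔞) :=
  (addAutToMulAut ↥𝔞).comp ((DistribMulAction.toAddAut Rˣ ↥𝔞).comp μ.subtype)

/-- The semidirect product `𝔞 ⋊ μ` of an ideal `𝔞 ⊆ R` by a subgroup `μ ≤ Rˣ` acting by
multiplication. -/
noncomputable abbrev IdealSemidirect (μ : Subgroup Rˣ) (𝔞 : Ideal R) :=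
  Multiplicative ↥𝔞 ⋊[idealAction μ 𝔞] ↥μ

/-!
Since `μ` is abelian, conjugating `(r, ρ)` by `(c, a)` gives `(c + a r - ρ c, ρ)`; writing
`c = a t`, the conjugates of `(r, ρ)` are exactly the pairs `(a (r + (1 - ρ) t), ρ)` with
`a ∈ μ`, `t ∈ 𝔞`. For `μ = ⟨ζ⟩`, `ζ ^ i = ζ ^ j` forces `i = j` because both exponents lie
below the order of `ζ`.
-/

namespace IdealSemidirect

variable {μ : Subgroup Rˣ} {𝔞 : Ideal R}

lemma conj_right (g x : IdealSemidirect μ 𝔞) : (g * x * g⁻¹).right = x.right := by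
  simp [mul_inv_cancel_comm]

lemma coe_toAdd_conj_left (g x : IdealSemidirect μ 𝔞) :
    ((Multiplicative.toAdd (g * x * g⁻¹).left : ↥𝔞) : R) =
      Multiplicative.toAdd g.left + (g.right : Rˣ) * Multiplicative.toAdd x.left
        - (x.right : Rˣ) * Multiplicative.toAdd g.left := by
  obtain ⟨b, a⟩ := g
  obtain ⟨r, ρ⟩ := x
  -- the left component of `(b, a) (r, ρ) (b, a)⁻¹` is `b + a • r + (a ρ) • (a⁻¹ • -b)`
  change ((Multiplicative.toAdd b : ↥𝔞) : R) + (a : Rˣ) * Multiplicative.toAdd r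
      + ((a : Rˣ) * (ρ : Rˣ) : Rˣ) * (((a : Rˣ)⁻¹ : Rˣ) * -Multiplicative.toAdd b) = _
  simp only [Units.val_mul]
  have ha := (a : Rˣ).mul_inv
  linear_combination (-(ρ : Rˣ) * (Multiplicative.toAdd b : ↥𝔞) : R) * ha

theorem isConj_mk_iff (r s : ↥𝔞) (ρ σ : ↥μ) :
    IsConj (⟨Multiplicative.ofAdd r, ρ⟩ : IdealSemidirect μ 𝔞) ⟨Multiplicative.ofAdd s, σ⟩ ↔
      ρ = σ ∧ ∃ ξ : Rˣ, ξ ∈ μ ∧ ∃ t : R, t ∈ 𝔞 ∧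
        (s : R) = (ξ : R) * ((r : R) + (1 - ((ρ : Rˣ) : R)) * t) := by
  rw [isConj_iff]
  constructor
  · rintro ⟨g, hg⟩
    have hρ : ρ = σ := (conj_right g _).symm.trans congr(SemidirectProduct.right $hg)
    have hs := coe_toAdd_conj_left g ⟨Multiplicative.ofAdd r, ρ⟩
    rw [hg] at hs
    refine ⟨hρ, g.right, g.right.2, ((g.right : Rˣ)⁻¹ : Rˣ) * Multiplicative.toAdd g.left,
      𝔞.mul_mem_left _ (Multiplicative.toAdd g.left).2, ?_⟩
    have ha := (g.right : Rˣ).mul_inv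
    simp only [toAdd_ofAdd] at hs
    linear_combination hs - ((1 - ((ρ : Rˣ) : R)) * Multiplicative.toAdd g.left : R) * ha
  · rintro ⟨rfl, ξ, hξ, t, ht, hs⟩
    refine ⟨⟨Multiplicative.ofAdd (ξ • ⟨t, ht⟩), ⟨ξ, hξ⟩⟩,
      SemidirectProduct.ext ?_ (conj_right _ _)⟩
    apply Multiplicative.toAdd.injective
    apply Subtype.ext
    rw [coe_toAdd_conj_left]
    simp only [toAdd_ofAdd, hs, Units.smul_def, Submodule.coe_smul, smul_eq_mul]
    ring

end IdealSemidirect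

/-- In the semidirect product `𝔞 ⋊ μ`, where `μ = ⟨ζ⟩` is a cyclic group of
roots of unity of order `m` acting on an ideal `𝔞` by multiplication, two elements `(r, ζ^i)`
and `(s, ζ^j)` (with `0 ≤ i, j ≤ m−1`) are conjugate if and only if `i = j` and there exist
`ξ ∈ μ` and `t ∈ 𝔞` such that `s = ξ(r + (1 − ζ^i)t)`. -/
theorem conjugacy_in_ideal_semidirect_product
    (ζ : Rˣ) (m : ℕ) (hζ : orderOf ζ = m) (𝔞 : Ideal R)
    (r s : ↥𝔞) (i j : ℕ) (hi : i < m) (hj : j < m) :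
    (∃ g : IdealSemidirect (zpowers ζ) 𝔞,
        g * ⟨Multiplicative.ofAdd r, ⟨ζ ^ i, pow_mem (mem_zpowers ζ) i⟩⟩ * g⁻¹ =
          ⟨Multiplicative.ofAdd s, ⟨ζ ^ j, pow_mem (mem_zpowers ζ) j⟩⟩) ↔
      (i = j ∧ ∃ ξ : Rˣ, ξ ∈ zpowers ζ ∧ ∃ t : R, t ∈ 𝔞 ∧
        (s : R) = (ξ : R) * ((r : R) + (1 - (ζ : R) ^ i) * t)) := by
  have hpow : ζ ^ i = ζ ^ j ↔ i = j :=
    ⟨fun h ↦ pow_injOn_Iio_orderOf (hζ ▸ hi) (hζ ▸ hj) h, congrArg _⟩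
  rw [← isConj_iff, IdealSemidirect.isConj_mk_iff, Subtype.mk.injEq, hpow,
    Units.val_pow_eq_pow_val]
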